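/- arXiv:0801.0170 — 7 statements merged into one kernel-verified Lean document; each statement's English description precedes it below -/
import Mathlib

section
/- Let κ be an infinite cardinal and σ = σ_κ as above. Every ordinal δ can be written uniquely as δ = σ(α₀) + σ(α₁) + ... + σ(α_{n-1}) + Δ where n ∈ ω, |σ(α₀)| > |σ(α₁)| > ... > |σ(α_{n-1})|, α_{n-1} > 0 (if n > 0), and Δ < κ. -/
/-!
`σ` is a normal function (it increases at successors because `σ α ≠ 0` for `α > 0`), so
every `δ ≥ κ.ord = σ 1` lies in exactly one block `[σ α, σ (α + 1))` with `α > 0`, i.e.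
`δ = σ α + ρ` with `ρ < |σ α|`. Peeling off `σ α` and recursing on `ρ < δ` yields the normal
form. Conversely, the tail of a normal form with leading index `α` is a sum of ordinals of
cardinality `< |σ α|`, hence below the additively indecomposable `|σ α|.ord`, so `α` must be
the block of `δ`.
-/

open Cardinal Set

/-- `NormalForm κ σ δ l Δ` says that `δ = σ α₀ + ⋯ + σ αₙ₋₁ + Δ` where
`l = [α₀, …, αₙ₋₁]`, the cardinalities `|σ αᵢ|` are strictly decreasing,
the last entry of `l` is positive, and `Δ < κ`. -/
def NormalForm (κ : Cardinal.{0}) (σ : Ordinal.{0} → Ordinal.{0})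
    (δ : Ordinal) (l : List Ordinal) (Δ : Ordinal) : Prop :=
  δ = (l.map σ).foldr (· + ·) Δ ∧
  l.Chain' (fun a b => (σ b).card < (σ a).card) ∧
  (∀ a, l.getLast? = some a → 0 < a) ∧
  Δ < κ.ord

open Order

theorem List.foldr_map_add_lt_ord {α : Type*} {c : Cardinal} (hc : ℵ₀ ≤ c) (f : α → Ordinal)
    {l : List α} {Δ : Ordinal} (hΔ : Δ < c.ord) (hl : ∀ a ∈ l, f a < c.ord) :
    (l.map f).foldr (· + ·) Δ < c.ord := by
  induction l with
  | nil => exact hΔ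
  | cons a l ih =>
    exact Ordinal.isPrincipal_add_ord hc (hl a mem_cons_self)
      (ih fun b hb => hl b (mem_cons_of_mem a hb))

structure IsSigma (κ : Cardinal.{0}) (σ : Ordinal.{0} → Ordinal.{0}) : Prop where
  map_zero : σ 0 = 0
  map_one : σ 1 = κ.ord
  map_add_one : ∀ α, 0 < α → σ (α + 1) = σ α + (σ α).card.ord
  map_of_isSuccLimit : ∀ β, IsSuccLimit β → σ β = sSup (σ '' Iio β)

namespace IsSigma

variable {κ : Cardinal.{0}} {σ : Ordinal.{0} → Ordinal.{0}} {α δ : Ordinal}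

theorem ord_le (hσ : IsSigma κ σ) (hα : 0 < α) : κ.ord ≤ σ α := by
  induction α using Ordinal.limitRecOn with
  | zero => exact absurd hα (lt_irrefl 0)
  | add_one α ih =>
    obtain rfl | hα0 := eq_zero_or_pos α
    · simp [hσ.map_one]
    · rw [hσ.map_add_one α hα0]
      exact (ih hα0).trans le_self_add
  | limit β hβ _ =>
    rw [← hσ.map_one, hσ.map_of_isSuccLimit β hβ]
    exact le_csSup Ordinal.bddAbove_of_small
      (mem_image_of_mem σ (Ordinal.one_lt_of_isSuccLimit hβ))

theorem le_card (hσ : IsSigma κ σ) (hα : 0 < α) : κ ≤ (σ α).card :=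
  Cardinal.ord_le.1 (hσ.ord_le hα)

theorem ord_card_pos (hσ : IsSigma κ σ) (hκ : κ ≠ 0) (hα : 0 < α) : 0 < (σ α).card.ord :=
  ord_pos.2 ((pos_iff_ne_zero.2 hκ).trans_le (hσ.le_card hα))

theorem isNormal (hσ : IsSigma κ σ) (hκ : κ ≠ 0) : IsNormal σ := by
  refine IsNormal.of_succ_lt (fun a => ?_) (fun {a} ha => ?_)
  · rw [succ_eq_add_one]
    obtain rfl | ha := eq_zero_or_pos a
    · rw [zero_add, hσ.map_one, hσ.map_zero]
      exact ord_pos.2 (pos_iff_ne_zero.2 hκ)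
    · rw [hσ.map_add_one a ha]
      exact lt_add_of_pos_right _ (hσ.ord_card_pos hκ ha)
  · rw [hσ.map_of_isSuccLimit a ha]
    exact isLUB_csSup ⟨_, mem_image_of_mem σ (mem_Iio.2 ha.bot_lt)⟩ Ordinal.bddAbove_of_small

theorem existsUnique_le_lt_add_one (hσ : IsSigma κ σ) (hκ : κ ≠ 0) (hδ : κ.ord ≤ δ) :
    ∃! α, 0 < α ∧ σ α ≤ δ ∧ δ < σ (α + 1) := by
  have hσn := hσ.isNormal hκ
  obtain ⟨α, hle, hlt⟩ := hσn.exists_map_le_lt_map_succ (x := δ) (by simp [hσ.map_zero])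
  have hα : 0 < α := by
    refine pos_iff_ne_zero.2 fun hα => hδ.not_gt ?_
    rwa [hα, succ_eq_add_one, zero_add, hσ.map_one] at hlt
  refine ⟨α, ⟨hα, hle, succ_eq_add_one α ▸ hlt⟩, fun β ⟨_, hβle, hβlt⟩ => le_antisymm ?_ ?_⟩
  · exact lt_succ_iff.1 (hσn.strictMono.lt_iff_lt.1 (hβle.trans_lt hlt))
  · rw [← succ_eq_add_one] at hβlt
    exact lt_succ_iff.1 (hσn.strictMono.lt_iff_lt.1 (hle.trans_lt hβlt))

theorem sub_lt_ord_card (hσ : IsSigma κ σ) (hκ : κ ≠ 0) (hα : 0 < α) (hlt : δ < σ (α + 1)) :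
    δ - σ α < (σ α).card.ord := by
  rw [hσ.map_add_one α hα] at hlt
  exact Ordinal.sub_lt_of_lt_add hlt (hσ.ord_card_pos hκ hα)

end IsSigma

variable {κ : Cardinal.{0}} {σ : Ordinal.{0} → Ordinal.{0}} {δ Δ : Ordinal} {l : List Ordinal}

theorem normalForm_nil_iff : NormalForm κ σ δ [] Δ ↔ Δ = δ ∧ δ < κ.ord :=
  ⟨fun ⟨h, _, _, hΔ⟩ => ⟨h.symm, h ▸ hΔ⟩,
    fun ⟨h, hδ⟩ => ⟨h.symm, List.isChain_nil, by simp, h ▸ hδ⟩⟩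

theorem NormalForm.head_pos {a : Ordinal} (hσ0 : σ 0 = 0) (h : NormalForm κ σ δ (a :: l) Δ) :
    0 < a := by
  obtain ⟨-, hchain, hlast, -⟩ := h
  cases l with
  | nil => exact hlast a rfl
  | cons b l =>
    refine pos_iff_ne_zero.2 fun ha => ?_
    simpa [ha, hσ0] using (List.isChain_cons_cons.1 hchain).1

theorem normalForm_cons_iff (hσ : IsSigma κ σ) (hκ : ℵ₀ ≤ κ) {a : Ordinal} :
    NormalForm κ σ δ (a :: l) Δ ↔
      0 < a ∧ ∃ ρ < (σ a).card.ord, δ = σ a + ρ ∧ NormalForm κ σ ρ l Δ := by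
  constructor
  · intro h
    have ha := h.head_pos hσ.map_zero
    obtain ⟨rfl, hchain, hlast, hΔ⟩ := h
    have hκa := hσ.le_card ha
    have hdesc := @List.IsChain.pairwise _ _ _ ⟨fun h₁ h₂ => h₂.trans h₁⟩ hchain
    refine ⟨ha, _, List.foldr_map_add_lt_ord (hκ.trans hκa) σ (hΔ.trans_le (ord_le_ord.2 hκa))
      fun b hb => lt_ord.2 (List.rel_of_pairwise_cons hdesc hb), rfl, rfl, hchain.tail,
      fun b hb => hlast b ?_, hΔ⟩
    cases l with
    | nil => simp at hb
    | cons c l => rwa [List.getLast?_cons_cons]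
  · rintro ⟨ha, ρ, hρ, rfl, rfl, hchain, hlast, hΔ⟩
    refine ⟨rfl, List.isChain_cons.2 ⟨fun b hb => ?_, hchain⟩, fun b hb => ?_, hΔ⟩
    · cases l with
      | nil => simp at hb
      | cons c l =>
        obtain rfl : c = b := by simpa using hb
        exact (Ordinal.card_le_card le_self_add).trans_lt (lt_ord.1 hρ)
    · cases l with
      | nil =>
        obtain rfl : a = b := by simpa using hb
        exact ha
      | cons c l => exact hlast b (by rwa [List.getLast?_cons_cons] at hb)

theorem normalForm_cons_iff_of_le_of_lt (hσ : IsSigma κ σ) (hκ : ℵ₀ ≤ κ) {α β : Ordinal}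
    (hα : 0 < α) (hle : σ α ≤ δ) (hlt : δ < σ (α + 1)) :
    NormalForm κ σ δ (β :: l) Δ ↔ β = α ∧ NormalForm κ σ (δ - σ α) l Δ := by
  have hκ0 : κ ≠ 0 := (aleph0_pos.trans_le hκ).ne'
  rw [normalForm_cons_iff hσ hκ]
  constructor
  · rintro ⟨hβ, ρ, hρ, rfl, hNF⟩
    have hβlt : σ β + ρ < σ (β + 1) := by
      rw [hσ.map_add_one β hβ]
      exact (add_lt_add_iff_left _).2 hρ
    obtain rfl := (hσ.existsUnique_le_lt_add_one hκ0 ((hσ.ord_le hα).trans hle)).unique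
      ⟨hβ, le_self_add, hβlt⟩ ⟨hα, hle, hlt⟩
    exact ⟨rfl, by rwa [Ordinal.add_sub_cancel]⟩
  · rintro ⟨rfl, hNF⟩
    exact ⟨hα, δ - σ β, hσ.sub_lt_ord_card hκ0 hα hlt,
      (Ordinal.add_sub_cancel_of_le hle).symm, hNF⟩

/-- Every ordinal has a unique `σ_κ`-normal form. -/
theorem normalForm_exists_unique (κ : Cardinal.{0}) (hκ : ℵ₀ ≤ κ)
    (σ : Ordinal.{0} → Ordinal.{0})
    (hσ0 : σ 0 = 0) (hσ1 : σ 1 = κ.ord)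
    (hσs : ∀ α : Ordinal, 0 < α → σ (α + 1) = σ α + ((σ α).card).ord)
    (hσl : ∀ β : Ordinal, Order.IsSuccLimit β → σ β = sSup (σ '' Set.Iio β)) :
    ∀ δ : Ordinal, ∃! p : List Ordinal × Ordinal, NormalForm κ σ δ p.1 p.2 := by
  have hσ : IsSigma κ σ := ⟨hσ0, hσ1, hσs, hσl⟩
  have hκ0 : κ ≠ 0 := (aleph0_pos.trans_le hκ).ne'
  intro δ
  induction δ using WellFoundedLT.induction with | _ δ IH =>
  rcases lt_or_ge δ κ.ord with hδ | hδ
  · refine ⟨([], δ), normalForm_nil_iff.2 ⟨rfl, hδ⟩, ?_⟩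
    rintro ⟨_ | ⟨a, l⟩, Δ⟩ h
    · obtain ⟨rfl, -⟩ := normalForm_nil_iff.1 h
      rfl
    · obtain ⟨ha, _, -, rfl, -⟩ := (normalForm_cons_iff hσ hκ).1 h
      exact absurd hδ ((hσ.ord_le ha).trans le_self_add).not_gt
  obtain ⟨α, ⟨hα, hle, hlt⟩, -⟩ := hσ.existsUnique_le_lt_add_one hκ0 hδ
  have hcons {β l Δ} :=
    normalForm_cons_iff_of_le_of_lt (β := β) (l := l) (Δ := Δ) hσ hκ hα hle hlt
  have hρ : δ - σ α < δ :=
    (hσ.sub_lt_ord_card hκ0 hα hlt).trans_le ((ord_card_le _).trans hle)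
  obtain ⟨⟨l, Δ⟩, hNF, huniq⟩ := IH (δ - σ α) hρ
  refine ⟨(α :: l, Δ), hcons.2 ⟨rfl, hNF⟩, ?_⟩
  rintro ⟨_ | ⟨β, l'⟩, Δ'⟩ h
  · exact absurd hδ (normalForm_nil_iff.1 h).2.not_ge
  · obtain ⟨rfl, h⟩ := hcons.1 h
    cases huniq (l', Δ') h
    rfl
end

section
/- For every infinite cardinal κ there exists a class function φ : Ord → [Ord × κ]^{<ω} such that (1) φ(α) ⊆ α × κ for every ordinal α, and (2) for every ordinal δ of the form δ = κ·ε there is γ(δ) < δ such that every finite subset of [γ(δ), δ) × κ lies in the image φ''δ = {φ(β) : β < δ}. -/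
/-!
Write `β = κ·ξ + ρ` with `ρ < κ`, so that block `ξ` consists of `κ` slots. Every finite
`A ⊆ Ord × κ` gets a target block `τ(A)`, at least the block of its largest element, and the
slots of block `ξ` list the sets with target `ξ`, each of them at cofinally many slots; `φ(β)` is
the set listed at `β` if it lies in `β × κ`, and `∅` otherwise. This works as soon as at most `κ`
sets share a target, since then every `A` is listed at a slot above all of its elements.

If the elements of `A` lie in the blocks `e₁ ≤ … ≤ eₙ`, let `h` be least with `eₙ < e₁ + ω^h`.
Then `A ⊆ κ·[c, c + ω^h) × κ` for `c = ω^h·⌊e₁ / ω^h⌋`, and the translate of `A` into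
`κ·ω^h × κ` is coded injectively by a pair `(v, s)` with `s < κ` and `v < ω^h` whose height
(the least `η` with `v < ω^η`) is exactly `h`. Put `τ(A) = eₙ + v`. Knowing `τ(A)` and `v`
one recovers `h`, then `c`, then `A`; as an ordinal has only finitely many right summands, at
most `ℵ₀·κ` sets have a given target.
Moreover `τ(A) < e₁ + ω^h`, so if `ε = λ + ω^η` and `A ⊆ [κ·λ, κ·ε) × κ` then `h ≤ η` and
`τ(A) < ε`: the bound `γ = κ·λ` works for `δ = κ·ε`.
-/

open Cardinal Set Ordinal Order

universe u v

namespace CanonicalKappaFunction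

theorem exists_add_omega0_opow_eq {ε : Ordinal.{u}} (hε : ε ≠ 0) :
    ∃ l e : Ordinal.{u}, l + ω ^ e = ε := by
  induction ε using WellFoundedLT.induction with
  | _ ε ih =>
    set p := ω ^ log ω ε
    obtain ⟨n, hn⟩ := lt_omega0.1 (div_opow_log_lt ε one_lt_omega0)
    rcases eq_or_ne (ε % p) 0 with hr | hr
    · obtain ⟨m, rfl⟩ : ∃ m, n = m + 1 :=
        Nat.exists_eq_add_one.2 (by exact_mod_cast hn ▸ div_opow_log_pos ω hε)
      refine ⟨p * m, log ω ε, ?_⟩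
      rw [← mul_add_one, ← Nat.cast_add_one, ← hn, ← add_zero (p * _), ← hr, div_add_mod]
    · obtain ⟨l, e, hl⟩ := ih _ ((mod_lt ε (opow_pos _ omega0_pos).ne').trans_le
        (opow_log_le_self ω hε)) hr
      exact ⟨p * (ε / p) + l, e, by rw [add_assoc, hl, div_add_mod]⟩

theorem add_omega0_opow_eq_of_le_of_lt {l a e : Ordinal} (hla : l ≤ a) (ha : a < l + ω ^ e) :
    a + ω ^ e = l + ω ^ e := by
  rw [← Ordinal.add_sub_cancel_of_le hla, add_assoc,
    add_omega0_opow (sub_lt_of_lt_add ha (opow_pos _ omega0_pos))]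

theorem omega0_opow_mul_div_add (a e : Ordinal) : ω ^ e * (a / ω ^ e) + ω ^ e = a + ω ^ e := by
  conv_rhs => rw [← div_add_mod a (ω ^ e), add_assoc,
    add_omega0_opow (mod_lt a (opow_pos _ omega0_pos).ne')]

theorem div_opow_eq_of_le_of_lt_add {a x e : Ordinal} (hax : a ≤ x) (hx : x < a + ω ^ e) :
    x / ω ^ e = a / ω ^ e := by
  have hp : ω ^ e ≠ 0 := (opow_pos _ omega0_pos).ne'
  refine le_antisymm ?_ (div_le_left hax _)
  rw [← lt_succ_iff, ← lt_mul_iff_div_lt hp, mul_succ, omega0_opow_mul_div_add]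
  exact hx

noncomputable def omegaHeight (x : Ordinal.{u}) : Ordinal.{u} := sInf {η | x < ω ^ η}

theorem lt_omega0_opow_omegaHeight (x : Ordinal) : x < ω ^ omegaHeight x :=
  csInf_mem (s := {η | x < ω ^ η}) ⟨_, lt_opow_succ_log_self one_lt_omega0 x⟩

theorem omegaHeight_le {x e : Ordinal} (h : x < ω ^ e) : omegaHeight x ≤ e := csInf_le' h

theorem omegaHeight_eq_succ {x g : Ordinal} (h₁ : ω ^ g ≤ x) (h₂ : x < ω ^ succ g) :
    omegaHeight x = succ g := by
  refine (omegaHeight_le h₂).antisymm (succ_le_of_lt (lt_of_not_ge fun hle => ?_))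
  exact (h₁.trans_lt (lt_omega0_opow_omegaHeight x)).not_ge
    (opow_le_opow_right omega0_pos hle)

theorem mk_Iio_omega0_opow_omegaHeight_le (x : Ordinal.{u}) :
    #(Iio (ω ^ omegaHeight x)) ≤ #{v | omegaHeight v = omegaHeight x} := by
  rcases eq_or_ne x 0 with rfl | hx
  · have h0 : omegaHeight 0 = 0 := nonpos_iff_eq_zero.1 (omegaHeight_le (by simp))
    rw [h0, opow_zero, Cardinal.mk_Iio_ordinal, card_one, Cardinal.lift_one,
      Cardinal.one_le_iff_ne_zero, mk_ne_zero_iff]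
    exact ⟨⟨0, h0⟩⟩
  set g := log ω x
  have hshift : ∀ u < ω ^ succ g, omegaHeight (ω ^ g + u) = succ g := fun u hu =>
    omegaHeight_eq_succ le_self_add (isPrincipal_add_omega0_opow _
      ((opow_lt_opow_iff_right one_lt_omega0).2 (lt_succ g)) hu)
  have hxg : omegaHeight x = succ g :=
    omegaHeight_eq_succ (opow_log_le_self ω hx) (lt_opow_succ_log_self one_lt_omega0 x)
  rw [hxg, ← Cardinal.mk_image_eq_of_injOn (ω ^ g + ·) _ (fun _ _ _ _ => add_left_cancel)]
  exact mk_le_mk_of_subset (by rintro _ ⟨u, hu, rfl⟩; exact hshift u hu)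

def rightSummands (ξ : Ordinal.{u}) : Set Ordinal.{u} := {v | ∃ a, a + v = ξ}

theorem finite_rightSummands (ξ : Ordinal.{u}) : (rightSummands ξ).Finite := by
  let least (v : rightSummands ξ) : Ordinal := sInf {a | a + v.1 = ξ}
  have hleast (v : rightSummands ξ) : least v + v.1 = ξ := csInf_mem v.2
  have hanti : StrictAnti least := fun v w hvw => lt_of_not_ge fun hle =>
    (add_le_add_iff_left (least v)).1 ((add_le_add hle le_rfl).trans_eq
      ((hleast w).trans (hleast v).symm)) |>.not_gt hvw
  have := hanti.wellFoundedGT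
  exact Set.finite_coe_iff.1 (Finite.of_wellFoundedLT_wellFoundedGT _)

theorem exists_injOn_mapsTo_of_mk_le {α β : Type v} [Nonempty β] {s : Set α} {t : Set β}
    (h : #s ≤ #t) : ∃ f : α → β, InjOn f s ∧ MapsTo f s t := by
  classical
  obtain ⟨e⟩ := h
  refine ⟨fun x => if hx : x ∈ s then e ⟨x, hx⟩ else Classical.arbitrary β,
    fun x hx y hy hxy => ?_, fun x hx => ?_⟩
  · simp only [dif_pos hx, dif_pos hy] at hxy
    exact congrArg Subtype.val (e.injective (Subtype.ext hxy))
  · simp only [dif_pos hx]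
    exact (e _).2

theorem mk_Iic_lt_mk_Iio_ord {κ : Cardinal.{u}} (hκ : ℵ₀ ≤ κ) {b : Ordinal.{u}}
    (hb : b < κ.ord) : #(Iic b) < #(Iio κ.ord) := by
  rw [← Iio_succ, Cardinal.mk_Iio_ordinal, Cardinal.mk_Iio_ordinal, Cardinal.lift_lt, card_ord,
    ← lt_ord]
  exact (isSuccLimit_ord hκ).succ_lt hb

/-- Take an injection `j : S × κ.ord → κ.ord` and let `f` read off the first coordinate of its
inverse: the slots `j (s, y)`, `y < κ.ord`, are `κ` many, hence unbounded in `κ.ord`. -/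
theorem exists_cofinal_enumeration {α : Type (u + 1)} [Nonempty α] {κ : Cardinal.{u}}
    (hκ : ℵ₀ ≤ κ) {S : Set α} (hS : #S ≤ lift.{u + 1} κ) :
    ∃ f : Ordinal.{u} → α, ∀ s ∈ S, ∀ b < κ.ord, ∃ ρ < κ.ord, b < ρ ∧ f ρ = s := by
  have hP : #(S ×ˢ Iio κ.ord) ≤ #(Iio κ.ord) := by
    rw [mk_setProd, Cardinal.mk_Iio_ordinal, card_ord]
    calc #S * lift.{u + 1} κ ≤ lift.{u + 1} κ * lift.{u + 1} κ := by gcongr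
      _ = lift.{u + 1} κ := mul_eq_self (aleph0_le_lift.2 hκ)
  obtain ⟨j, hjinj, hjmaps⟩ := exists_injOn_mapsTo_of_mk_le hP
  refine ⟨fun ρ => (Function.invFunOn j (S ×ˢ Iio κ.ord) ρ).1, fun s hs b hb => ?_⟩
  obtain ⟨y, hy, hby⟩ : ∃ y ∈ Iio κ.ord, b < j (s, y) := by
    by_contra! hle
    refine (mk_Iic_lt_mk_Iio_ord hκ hb).not_ge ?_
    rw [← mk_image_eq_of_injOn (fun y => j (s, y)) _
      (fun y hy y' hy' h => congrArg Prod.snd (hjinj ⟨hs, hy⟩ ⟨hs, hy'⟩ h))]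
    exact mk_le_mk_of_subset (by rintro _ ⟨y, hy, rfl⟩; exact hle y hy)
  exact ⟨j (s, y), hjmaps ⟨hs, hy⟩, hby,
    congrArg Prod.fst (hjinj.leftInvOn_invFunOn ⟨hs, hy⟩)⟩

def boundedFinsets (κ : Cardinal.{u}) (B : Ordinal.{u}) :
    Set (Finset (Ordinal.{u} × Ordinal.{u})) :=
  {A | ∀ a ∈ A, a.1 < B ∧ a.2 < κ.ord}

theorem mk_boundedFinsets_mul {κ : Cardinal.{u}} (hκ : ℵ₀ ≤ κ) {W : Ordinal.{u}} (hW : W ≠ 0) :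
    #(boundedFinsets κ (κ.ord * W)) = #(Iio W ×ˢ Iio κ.ord) := by
  let p : Ordinal.{u} × Ordinal.{u} → Prop := fun a => a.1 < κ.ord * W ∧ a.2 < κ.ord
  have hp : #{a // p a} = lift.{u + 1} (κ * W.card) * lift.{u + 1} κ := by
    change #(Iio (κ.ord * W) ×ˢ Iio κ.ord) = _
    rw [mk_setProd, Cardinal.mk_Iio_ordinal, Cardinal.mk_Iio_ordinal, card_mul, card_ord]
  have hκW : ℵ₀ ≤ lift.{u + 1} (κ * W.card) * lift.{u + 1} κ :=
    (aleph0_le_lift.2 hκ).trans (Cardinal.le_mul_left (Cardinal.lift_eq_zero.not.2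
      (mul_ne_zero (aleph0_pos.trans_le hκ).ne' (Ordinal.card_eq_zero.not.2 hW))))
  have : Infinite {a // p a} := Cardinal.infinite_iff.2 (hp ▸ hκW)
  calc #(boundedFinsets κ (κ.ord * W)) = #(Finset {a // p a}) :=
        (mk_congr (Equiv.finsetSubtypeComm p)).symm
    _ = lift.{u + 1} (κ * W.card) * lift.{u + 1} κ := (mk_finset_of_infinite _).trans hp
    _ = #(Iio W ×ˢ Iio κ.ord) := by
        rw [mk_setProd, Cardinal.mk_Iio_ordinal, Cardinal.mk_Iio_ordinal, card_ord,
          ← Cardinal.lift_mul, ← Cardinal.lift_mul, mul_right_comm, mul_eq_self hκ, mul_comm]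

section Blocks

variable (κ : Cardinal.{u})

noncomputable def firstBlock (A : Finset (Ordinal.{u} × Ordinal.{u})) : Ordinal.{u} :=
  sInf (Prod.fst '' (A : Set (Ordinal.{u} × Ordinal.{u}))) / κ.ord

noncomputable def lastBlock (A : Finset (Ordinal.{u} × Ordinal.{u})) : Ordinal.{u} :=
  A.sup Prod.fst / κ.ord

noncomputable def spanHeight (A : Finset (Ordinal.{u} × Ordinal.{u})) : Ordinal.{u} :=
  omegaHeight (lastBlock κ A - firstBlock κ A)

noncomputable def baseBlock (A : Finset (Ordinal.{u} × Ordinal.{u})) : Ordinal.{u} :=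
  ω ^ spanHeight κ A * (firstBlock κ A / ω ^ spanHeight κ A)

noncomputable def normalize (A : Finset (Ordinal.{u} × Ordinal.{u})) :
    Finset (Ordinal.{u} × Ordinal.{u}) :=
  A.image fun a => (a.1 - κ.ord * baseBlock κ A, a.2)

/-- Junk unless `h` is the height of some ordinal (`0` or a successor): for limit `h` no ordinal
has height `h`, so the required injection does not exist. -/
noncomputable def layerCode (h : Ordinal.{u}) :
    Finset (Ordinal.{u} × Ordinal.{u}) → Ordinal.{u} × Ordinal.{u} :=
  Classical.epsilon fun f => InjOn f (boundedFinsets κ (κ.ord * ω ^ h)) ∧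
    MapsTo f (boundedFinsets κ (κ.ord * ω ^ h)) ({v | omegaHeight v = h} ×ˢ Iio κ.ord)

noncomputable def code (A : Finset (Ordinal.{u} × Ordinal.{u})) : Ordinal.{u} × Ordinal.{u} :=
  layerCode κ (spanHeight κ A) (normalize κ A)

noncomputable def targetBlock (A : Finset (Ordinal.{u} × Ordinal.{u})) : Ordinal.{u} :=
  lastBlock κ A + (code κ A).1

def fiber (ξ : Ordinal.{u}) : Set (Finset (Ordinal.{u} × Ordinal.{u})) :=
  {A | (∀ a ∈ A, a.2 < κ.ord) ∧ targetBlock κ A = ξ}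

variable {κ} {A : Finset (Ordinal.{u} × Ordinal.{u})}

theorem firstBlock_le_lastBlock : firstBlock κ A ≤ lastBlock κ A := by
  refine div_le_left ?_ _
  rcases A.eq_empty_or_nonempty with rfl | ⟨a, ha⟩
  · simp
  · exact (csInf_le' (mem_image_of_mem _ (Finset.mem_coe.2 ha))).trans
      (A.le_sup (f := Prod.fst) ha)

theorem lastBlock_lt_firstBlock_add : lastBlock κ A < firstBlock κ A + ω ^ spanHeight κ A := by
  conv_lhs => rw [← Ordinal.add_sub_cancel_of_le (firstBlock_le_lastBlock (A := A))]
  exact (add_lt_add_iff_left _).2 (lt_omega0_opow_omegaHeight _)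

theorem normalize_mem_boundedFinsets (hA : ∀ a ∈ A, a.2 < κ.ord) :
    normalize κ A ∈ boundedFinsets κ (κ.ord * ω ^ spanHeight κ A) := by
  intro p hp
  obtain ⟨a, ha, rfl⟩ := Finset.mem_image.1 hp
  have hκ0 : κ.ord ≠ 0 := (zero_le.trans_lt (hA a ha)).ne'
  refine ⟨sub_lt_of_lt_add ?_ (mul_pos (pos_iff_ne_zero.2 hκ0) (opow_pos _ omega0_pos)),
    hA a ha⟩
  calc a.1 ≤ A.sup Prod.fst := A.le_sup (f := Prod.fst) ha
    _ < κ.ord * succ (lastBlock κ A) := lt_mul_succ_div _ hκ0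
    _ ≤ κ.ord * (baseBlock κ A + ω ^ spanHeight κ A) := by
        rw [baseBlock, omega0_opow_mul_div_add]
        exact mul_le_mul_right (succ_le_of_lt lastBlock_lt_firstBlock_add) _
    _ = κ.ord * baseBlock κ A + κ.ord * ω ^ spanHeight κ A := mul_add _ _ _

theorem image_normalize :
    (normalize κ A).image (fun p => (κ.ord * baseBlock κ A + p.1, p.2)) = A := by
  rw [normalize, Finset.image_image]
  refine (Finset.image_congr fun a ha => ?_).trans A.image_id
  refine Prod.ext (Ordinal.add_sub_cancel_of_le ?_) rfl
  calc κ.ord * baseBlock κ A ≤ κ.ord * firstBlock κ A := mul_le_mul_right (mul_div_le _ _) _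
    _ ≤ sInf (Prod.fst '' (A : Set (Ordinal × Ordinal))) := mul_div_le _ _
    _ ≤ a.1 := csInf_le' (mem_image_of_mem _ (Finset.mem_coe.2 ha))

theorem layerCode_spec (hκ : ℵ₀ ≤ κ) (x : Ordinal.{u}) :
    InjOn (layerCode κ (omegaHeight x)) (boundedFinsets κ (κ.ord * ω ^ omegaHeight x)) ∧
      MapsTo (layerCode κ (omegaHeight x)) (boundedFinsets κ (κ.ord * ω ^ omegaHeight x))
        ({v | omegaHeight v = omegaHeight x} ×ˢ Iio κ.ord) := by
  refine Classical.epsilon_spec (exists_injOn_mapsTo_of_mk_le ?_)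
  rw [mk_boundedFinsets_mul hκ (opow_pos _ omega0_pos).ne', mk_setProd, mk_setProd]
  gcongr
  exact mk_Iio_omega0_opow_omegaHeight_le x

theorem code_mem (hκ : ℵ₀ ≤ κ) (hA : ∀ a ∈ A, a.2 < κ.ord) :
    code κ A ∈ {v | omegaHeight v = spanHeight κ A} ×ˢ Iio κ.ord :=
  (layerCode_spec hκ _).2 (normalize_mem_boundedFinsets hA)

theorem targetBlock_lt (hκ : ℵ₀ ≤ κ) (hA : ∀ a ∈ A, a.2 < κ.ord) :
    targetBlock κ A < firstBlock κ A + ω ^ spanHeight κ A := by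
  have hv : (code κ A).1 < ω ^ spanHeight κ A :=
    (code_mem hκ hA).1 ▸ lt_omega0_opow_omegaHeight _
  rw [targetBlock, ← Ordinal.add_sub_cancel_of_le (firstBlock_le_lastBlock (A := A)), add_assoc]
  exact (add_lt_add_iff_left _).2
    (isPrincipal_add_omega0_opow _ (lt_omega0_opow_omegaHeight _) hv)

theorem baseBlock_eq (hκ : ℵ₀ ≤ κ) (hA : ∀ a ∈ A, a.2 < κ.ord) :
    baseBlock κ A = ω ^ spanHeight κ A * (targetBlock κ A / ω ^ spanHeight κ A) := by
  rw [baseBlock, div_opow_eq_of_le_of_lt_add (x := targetBlock κ A)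
    (firstBlock_le_lastBlock.trans le_self_add) (targetBlock_lt hκ hA)]

/-- The height of `(code κ A).1` is `spanHeight κ A`, which together with the target block
determines `baseBlock κ A`. -/
theorem injOn_code_fiber (hκ : ℵ₀ ≤ κ) (ξ : Ordinal.{u}) : InjOn (code κ) (fiber κ ξ) := by
  intro A hA A' hA' hcode
  have hh : spanHeight κ A = spanHeight κ A' := by
    rw [← (code_mem hκ hA.1).1, ← (code_mem hκ hA'.1).1, hcode]
  have hbase : baseBlock κ A = baseBlock κ A' := by
    rw [baseBlock_eq hκ hA.1, baseBlock_eq hκ hA'.1, hA.2, hA'.2, hh]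
  have hnorm : normalize κ A = normalize κ A' := by
    have hA'mem : normalize κ A' ∈ boundedFinsets κ (κ.ord * ω ^ spanHeight κ A) :=
      hh ▸ normalize_mem_boundedFinsets hA'.1
    rw [code, code, ← hh] at hcode
    exact (layerCode_spec hκ _).1 (normalize_mem_boundedFinsets hA.1) hA'mem hcode
  rw [← image_normalize (A := A), ← image_normalize (A := A'), hnorm, hbase]

theorem mapsTo_code_fiber (hκ : ℵ₀ ≤ κ) (ξ : Ordinal.{u}) :
    MapsTo (code κ) (fiber κ ξ) (rightSummands ξ ×ˢ Iio κ.ord) :=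
  fun A hA => ⟨⟨lastBlock κ A, hA.2⟩, (code_mem hκ hA.1).2⟩

theorem mk_fiber_le (hκ : ℵ₀ ≤ κ) (ξ : Ordinal.{u}) : #(fiber κ ξ) ≤ lift.{u + 1} κ := by
  rw [← mk_image_eq_of_injOn _ _ (injOn_code_fiber hκ ξ)]
  refine (mk_le_mk_of_subset (mapsTo_code_fiber hκ ξ).image_subset).trans ?_
  rw [mk_setProd, Cardinal.mk_Iio_ordinal, card_ord]
  exact (mul_le_max_of_aleph0_le_right (aleph0_le_lift.2 hκ)).trans
    (max_le ((finite_rightSummands ξ).lt_aleph0.le.trans (aleph0_le_lift.2 hκ)) le_rfl)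

theorem targetBlock_lt_of_forall_mem (hκ : ℵ₀ ≤ κ) {l e : Ordinal.{u}} (hne : A.Nonempty)
    (hA : ∀ a ∈ A, κ.ord * l ≤ a.1 ∧ a.1 < κ.ord * (l + ω ^ e) ∧ a.2 < κ.ord) :
    targetBlock κ A < l + ω ^ e := by
  have hκ0 : κ.ord ≠ 0 := (ord_pos.2 (aleph0_pos.trans_le hκ)).ne'
  have hfirst : l ≤ firstBlock κ A := (mul_le_iff_le_div hκ0).1 <|
    le_csInf ((Finset.coe_nonempty.2 hne).image _) (by rintro _ ⟨a, ha, rfl⟩; exact (hA a ha).1)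
  have hlast : lastBlock κ A < l + ω ^ e := by
    obtain ⟨a₀, ha₀⟩ := hne
    refine (lt_mul_iff_div_lt hκ0).1 ((Finset.sup_lt_iff (bot_le.trans_lt (hA a₀ ha₀).2.1)).2
      fun a ha => (hA a ha).2.1)
  have habsorb := add_omega0_opow_eq_of_le_of_lt hfirst (firstBlock_le_lastBlock.trans_lt hlast)
  have hspan : spanHeight κ A ≤ e := omegaHeight_le <|
    sub_lt_of_lt_add (habsorb ▸ hlast) (opow_pos _ omega0_pos)
  calc targetBlock κ A < firstBlock κ A + ω ^ spanHeight κ A :=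
        targetBlock_lt hκ fun a ha => (hA a ha).2.2
    _ ≤ firstBlock κ A + ω ^ e := by gcongr; exact omega0_pos
    _ = l + ω ^ e := habsorb

end Blocks

section Phi

variable (κ : Cardinal.{u})

noncomputable def blockEnum (ξ : Ordinal.{u}) : Ordinal.{u} → Finset (Ordinal.{u} × Ordinal.{u}) :=
  Classical.epsilon fun f => ∀ A ∈ fiber κ ξ, ∀ b < κ.ord, ∃ ρ < κ.ord, b < ρ ∧ f ρ = A

open Classical in
noncomputable def phi (β : Ordinal.{u}) : Finset (Ordinal.{u} × Ordinal.{u}) :=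
  if blockEnum κ (β / κ.ord) (β % κ.ord) ∈ boundedFinsets κ β then
    blockEnum κ (β / κ.ord) (β % κ.ord)
  else ∅

theorem phi_mem_boundedFinsets (β : Ordinal.{u}) : phi κ β ∈ boundedFinsets κ β := by
  unfold phi
  split_ifs with h
  · exact h
  · simp [boundedFinsets]

theorem phi_zero : phi κ 0 = ∅ :=
  Finset.eq_empty_of_forall_notMem fun a ha =>
    not_lt_zero (phi_mem_boundedFinsets κ 0 a ha).1

variable {κ}

theorem blockEnum_spec (hκ : ℵ₀ ≤ κ) (ξ : Ordinal.{u}) :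
    ∀ A ∈ fiber κ ξ, ∀ b < κ.ord, ∃ ρ < κ.ord, b < ρ ∧ blockEnum κ ξ ρ = A :=
  Classical.epsilon_spec (exists_cofinal_enumeration hκ (mk_fiber_le hκ ξ))

theorem exists_lt_phi_eq (hκ : ℵ₀ ≤ κ) {l e : Ordinal.{u}}
    (A : Finset (Ordinal.{u} × Ordinal.{u}))
    (hA : ∀ a ∈ A, κ.ord * l ≤ a.1 ∧ a.1 < κ.ord * (l + ω ^ e) ∧ a.2 < κ.ord) :
    ∃ β < κ.ord * (l + ω ^ e), phi κ β = A := by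
  have hκ0 : κ.ord ≠ 0 := (ord_pos.2 (aleph0_pos.trans_le hκ)).ne'
  rcases A.eq_empty_or_nonempty with rfl | hne
  · exact ⟨0, mul_pos (pos_iff_ne_zero.2 hκ0) ((opow_pos _ omega0_pos).trans_le le_add_self),
      phi_zero κ⟩
  set ξ := targetBlock κ A
  have hξ : ξ < l + ω ^ e := targetBlock_lt_of_forall_mem hκ hne hA
  have hsup : A.sup Prod.fst < κ.ord * ξ + κ.ord := by
    rw [← mul_succ]
    exact (lt_mul_succ_div _ hκ0).trans_le
      (mul_le_mul_right (succ_le_succ (le_self_add : lastBlock κ A ≤ ξ)) _)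
  obtain ⟨ρ, hρκ, hρ, hρA⟩ := blockEnum_spec hκ ξ A ⟨fun a ha => (hA a ha).2.2, rfl⟩
    (A.sup Prod.fst - κ.ord * ξ) (sub_lt_of_lt_add hsup (pos_iff_ne_zero.2 hκ0))
  have hdiv : (κ.ord * ξ + ρ) / κ.ord = ξ := by
    rw [mul_add_div _ hκ0, div_eq_zero_of_lt hρκ, add_zero]
  have hmod : (κ.ord * ξ + ρ) % κ.ord = ρ := by rw [mul_add_mod_self, mod_eq_of_lt hρκ]
  have hbounded : A ∈ boundedFinsets κ (κ.ord * ξ + ρ) := fun a ha =>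
    ⟨((A.le_sup (f := Prod.fst) ha).trans (le_add_sub _ _)).trans_lt
      ((add_lt_add_iff_left _).2 hρ), (hA a ha).2.2⟩
  refine ⟨κ.ord * ξ + ρ, ?_, ?_⟩
  · calc κ.ord * ξ + ρ < κ.ord * succ ξ := by rw [mul_succ]; exact (add_lt_add_iff_left _).2 hρκ
      _ ≤ κ.ord * (l + ω ^ e) := mul_le_mul_right (succ_le_of_lt hξ) _
  · rw [phi, hdiv, hmod, hρA, if_pos hbounded]

end Phi

end CanonicalKappaFunction

open CanonicalKappaFunction

/-- For every infinite cardinal `κ` there is a canonical `κ`-function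
`φ : Ord → [Ord × κ]^{<ω}`: (1) `φ α ⊆ α × κ` for every `α`, and (2) for
every nonzero ordinal `δ` of the form `δ = κ·ε` there is `γ < δ` such that
every finite subset of `[γ, δ) × κ` appears as a value `φ β` for some `β < δ`. -/
theorem exists_canonical_kappa_function (κ : Cardinal.{0}) (hκ : ℵ₀ ≤ κ) :
    ∃ φ : Ordinal.{0} → Finset (Ordinal.{0} × Ordinal.{0}),
      (∀ α : Ordinal, ∀ a ∈ φ α, a.1 < α ∧ a.2 < κ.ord) ∧
      (∀ ε δ : Ordinal, δ = κ.ord * ε → δ ≠ 0 →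
        ∃ γ < δ, ∀ A : Finset (Ordinal × Ordinal),
          (∀ a ∈ A, γ ≤ a.1 ∧ a.1 < δ ∧ a.2 < κ.ord) →
          ∃ β < δ, φ β = A) := by
  refine ⟨phi κ, phi_mem_boundedFinsets κ, ?_⟩
  rintro ε δ rfl hδ
  obtain ⟨l, e, rfl⟩ := exists_add_omega0_opow_eq (right_ne_zero_of_mul hδ)
  refine ⟨κ.ord * l, ?_, fun A hA => exists_lt_phi_eq hκ A hA⟩
  exact mul_lt_mul_of_pos_left (lt_add_of_pos_right _ (opow_pos _ omega0_pos))
    (ord_pos.2 (aleph0_pos.trans_le hκ))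
end

section
/- Every topological space X has a dense subspace which is left-separated in order type d(X), i.e. there is an enumeration {p_α : α < d(X)} of a dense subset P such that for every δ < d(X), the closure of {p_α : α < δ} is disjoint from {p_α : δ ≤ α < d(X)}. -/
/-!
Enumerate a dense set `D` of size `κ = d(X)` in order type `κ`, and pick points greedily: `p_α` is
the first point of `D` outside the closure of `{p_β : β < α}`. Such a point exists because fewer
than `κ` points are never dense, and left-separation is then built in. If the picks were not dense,
some `d_ξ` would stay outside the closure of all of them, so every pick would be one of the fewer
than `κ` points `d_η` with `η < ξ`; but the `κ` picks are distinct.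
-/

open Cardinal Set

/-- The density of a topological space: the least cardinality of a dense subset. -/
noncomputable def density (X : Type*) [TopologicalSpace X] : Cardinal :=
  sInf {c : Cardinal | ∃ s : Set X, Dense s ∧ #s = c}

universe u

noncomputable def WellFoundedLT.recOnImage {ι X : Type*} [Preorder ι] [WellFoundedLT ι]
    (F : Set X → X) : ι → X :=
  WellFoundedLT.fix fun i rec => F (range fun j : Iio i => rec j j.2)

theorem WellFoundedLT.recOnImage_eq {ι X : Type*} [Preorder ι] [WellFoundedLT ι]
    (F : Set X → X) (i : ι) : recOnImage F i = F (recOnImage F '' Iio i) := by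
  rw [recOnImage, WellFoundedLT.fix_eq, image_eq_range]

theorem Cardinal.mk_image_Iio_lt_of_lt_ord {X : Type u} {κ : Cardinal.{u}}
    (f : Ordinal.{u} → X) {α : Ordinal.{u}} (hα : α < κ.ord) : #(f '' Iio α) < κ := by
  have h := mk_image_le_lift (f := f) (s := Iio α)
  rw [mk_Iio_ordinal, lift_lift, lift_le] at h
  exact h.trans_lt (lt_ord.mp hα)

theorem Cardinal.mk_image_Iio_ord_of_injOn {X : Type u} {κ : Cardinal.{u}}
    {f : Ordinal.{u} → X} (hf : InjOn f (Iio κ.ord)) : #(f '' Iio κ.ord) = κ := by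
  have h := mk_image_eq_of_injOn_lift f _ hf
  rwa [mk_Iio_ordinal, card_ord, lift_lift, lift_inj] at h

theorem Cardinal.exists_image_Iio_ord_eq {X : Type u} [Nonempty X] (s : Set X) :
    ∃ d : Ordinal.{u} → X, d '' Iio (#s).ord = s := by
  classical
  obtain ⟨e⟩ : Nonempty (Iio (#s).ord ≃ s) :=
    lift_mk_eq'.mp (by rw [mk_Iio_ordinal, card_ord, lift_lift])
  refine ⟨fun ξ => if h : ξ < (#s).ord then e ⟨ξ, h⟩ else Classical.arbitrary X, ?_⟩
  rw [image_eq_range]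
  convert (e.surjective.range_comp ((↑) : s → X)).trans Subtype.range_coe using 2
  funext ξ
  exact dif_pos ξ.2

theorem Dense.exists_notMem_closure {X : Type*} [TopologicalSpace X] {s t : Set X}
    (hs : Dense s) (ht : ¬Dense t) : ∃ x ∈ s, x ∉ closure t := by
  rw [dense_iff_closure_eq, ← ne_eq, ne_univ_iff_exists_notMem] at ht
  exact hs.exists_mem_open isClosed_closure.isOpen_compl ht

theorem density_le_mk {X : Type*} [TopologicalSpace X] {s : Set X} (hs : Dense s) :
    density X ≤ #s :=
  csInf_le' ⟨s, hs, rfl⟩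

theorem exists_dense_mk_eq_density (X : Type*) [TopologicalSpace X] :
    ∃ s : Set X, Dense s ∧ #s = density X :=
  csInf_mem (s := {c : Cardinal | ∃ s : Set X, Dense s ∧ #s = c}) ⟨_, univ, dense_univ, rfl⟩

theorem density_eq_zero (X : Type*) [TopologicalSpace X] [IsEmpty X] : density X = 0 :=
  nonpos_iff_eq_zero.mp <| (density_le_mk (s := ∅) isEmptyElim).trans_eq (mk_eq_zero _)

section GreedyEnumeration

variable {X : Type u} [TopologicalSpace X] (d : Ordinal.{u} → X) (κ : Cardinal.{u})

noncomputable def firstIndexOutsideClosure (t : Set X) : Ordinal.{u} :=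
  sInf {ξ | ξ < κ.ord ∧ d ξ ∉ closure t}

theorem firstIndexOutsideClosure_spec {t : Set X} (h : ∃ ξ < κ.ord, d ξ ∉ closure t) :
    firstIndexOutsideClosure d κ t < κ.ord ∧ d (firstIndexOutsideClosure d κ t) ∉ closure t :=
  csInf_mem (s := {ξ | ξ < κ.ord ∧ d ξ ∉ closure t}) h

theorem firstIndexOutsideClosure_le {t : Set X} {ξ : Ordinal.{u}} (hξ : ξ < κ.ord)
    (h : d ξ ∉ closure t) : firstIndexOutsideClosure d κ t ≤ ξ :=
  csInf_le' ⟨hξ, h⟩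

noncomputable def greedySeq : Ordinal.{u} → X :=
  WellFoundedLT.recOnImage fun t => d (firstIndexOutsideClosure d κ t)

theorem greedySeq_eq (α : Ordinal.{u}) :
    greedySeq d κ α = d (firstIndexOutsideClosure d κ (greedySeq d κ '' Iio α)) :=
  WellFoundedLT.recOnImage_eq _ α

variable {d κ}

theorem greedySeq_notMem_closure (hd : Dense (d '' Iio κ.ord))
    (hκ : ∀ t : Set X, #t < κ → ¬Dense t) {α : Ordinal.{u}} (hα : α < κ.ord) :
    greedySeq d κ α ∉ closure (greedySeq d κ '' Iio α) := by
  obtain ⟨_, ⟨ξ, hξ, rfl⟩, hξt⟩ :=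
    hd.exists_notMem_closure (hκ _ (mk_image_Iio_lt_of_lt_ord (greedySeq d κ) hα))
  rw [greedySeq_eq]
  exact (firstIndexOutsideClosure_spec d κ ⟨ξ, hξ, hξt⟩).2

theorem greedySeq_notMem_closure_image_Iio (hd : Dense (d '' Iio κ.ord))
    (hκ : ∀ t : Set X, #t < κ → ¬Dense t) {α δ : Ordinal.{u}} (hδα : δ ≤ α)
    (hα : α < κ.ord) : greedySeq d κ α ∉ closure (greedySeq d κ '' Iio δ) :=
  fun h => greedySeq_notMem_closure hd hκ hα <|
    closure_mono (image_mono (Iio_subset_Iio hδα)) h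

theorem injOn_greedySeq (hd : Dense (d '' Iio κ.ord))
    (hκ : ∀ t : Set X, #t < κ → ¬Dense t) : InjOn (greedySeq d κ) (Iio κ.ord) := by
  have hne : ∀ {α β}, β < α → α < κ.ord → greedySeq d κ β ≠ greedySeq d κ α :=
    fun hβα hα h => greedySeq_notMem_closure hd hκ hα <| subset_closure ⟨_, hβα, h⟩
  intro α hα β hβ h
  rcases lt_trichotomy α β with hαβ | rfl | hβα
  · exact absurd h (hne hαβ hβ)
  · rfl
  · exact absurd h.symm (hne hβα hα)

theorem dense_image_greedySeq (hd : Dense (d '' Iio κ.ord))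
    (hκ : ∀ t : Set X, #t < κ → ¬Dense t) : Dense (greedySeq d κ '' Iio κ.ord) := by
  set R := greedySeq d κ '' Iio κ.ord
  by_contra hR
  obtain ⟨_, ⟨ξ, hξ, rfl⟩, hξR⟩ := hd.exists_notMem_closure hR
  have hsub : R ⊆ d '' Iio ξ := by
    rintro _ ⟨α, hα, rfl⟩
    have hξα : d ξ ∉ closure (greedySeq d κ '' Iio α) :=
      fun h => hξR (closure_mono (image_mono (Iio_subset_Iio hα.le)) h)
    refine ⟨firstIndexOutsideClosure d κ (greedySeq d κ '' Iio α), ?_, (greedySeq_eq d κ α).symm⟩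
    refine (firstIndexOutsideClosure_le d κ hξ hξα).lt_of_ne fun h => hξR (subset_closure ?_)
    exact ⟨α, hα, by rw [greedySeq_eq, h]⟩
  have hcard := (mk_le_mk_of_subset hsub).trans_lt (mk_image_Iio_lt_of_lt_ord d hξ)
  rw [mk_image_Iio_ord_of_injOn (injOn_greedySeq hd hκ)] at hcard
  exact hcard.false

end GreedyEnumeration

/-- Every topological space has a dense subspace left-separated in order
type `d(X)`: an enumeration `⟨p_α : α < d(X)⟩` of a dense set such that
the closure of every initial segment is disjoint from the rest. -/
theorem exists_dense_left_separated (X : Type u) [TopologicalSpace X] :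
    ∃ p : Set.Iio (density X).ord → X,
      Dense (Set.range p) ∧
      ∀ δ : Ordinal, δ < (density X).ord →
        closure (p '' {a | (a : Ordinal) < δ}) ∩ (p '' {a | δ ≤ (a : Ordinal)}) = ∅ := by
  rcases isEmpty_or_nonempty X with hX | hX
  · have : IsEmpty (Iio (density X).ord) := by simp [density_eq_zero]
    exact ⟨isEmptyElim, fun x => isEmptyElim x, fun _ _ => eq_empty_of_isEmpty _⟩
  obtain ⟨s, hs, hsκ⟩ := exists_dense_mk_eq_density X
  obtain ⟨d, hd⟩ := exists_image_Iio_ord_eq s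
  rw [hsκ] at hd
  rw [← hd] at hs
  have hκ : ∀ t : Set X, #t < density X → ¬Dense t :=
    fun t ht htd => (density_le_mk htd).not_gt ht
  refine ⟨fun a => greedySeq d (density X) a, ?_, fun δ _ => ?_⟩
  · rw [← image_eq_range]
    exact dense_image_greedySeq hs hκ
  · refine eq_empty_of_forall_notMem ?_
    rintro _ ⟨hcl, α, hδα, rfl⟩
    refine greedySeq_notMem_closure_image_Iio hs hκ hδα α.2 (closure_mono ?_ hcl)
    rintro _ ⟨β, hβ, rfl⟩
    exact ⟨β, hβ, rfl⟩
end

section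
/- Let X be a regular topological space and κ an infinite cardinal. If X is initially κ-compact and has no free sequence of length κ⁺, then the tightness of X is at most κ. -/
open Cardinal Set

/-- `p` enumerates a free sequence of length `μ`. -/
def IsFreeSeq {X : Type u} [TopologicalSpace X] (μ : Ordinal.{u}) (p : Ordinal.{u} → X) : Prop :=
  ∀ δ < μ, closure (p '' Set.Iio δ) ∩ closure (p '' Set.Ico δ μ) = ∅

/-- `X` is initially `κ`-compact: every open cover of size at most `κ`
has a finite subcover. -/
def InitiallyCompact (X : Type u) [TopologicalSpace X] (κ : Cardinal.{u}) : Prop :=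
  ∀ 𝒰 : Set (Set X), (∀ U ∈ 𝒰, IsOpen U) → #𝒰 ≤ κ → ⋃₀ 𝒰 = Set.univ →
    ∃ 𝒱 ⊆ 𝒰, 𝒱.Finite ∧ ⋃₀ 𝒱 = Set.univ

/-!
Suppose `x ∈ closure A` but `x` lies in the closure of no subset of `A` of size `≤ κ`, and let
`S` be the `κ`-closure of `A`: the union of those closures. Then `x ∈ closure S \ S`, and `S`
contains the closure of each of its subsets of size `≤ κ`. By recursion on `α < κ⁺` choose points
`p α ∈ S` and closed neighbourhoods `U α` of `x` such that `p α` avoids the closure of the earlier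
points and lies in the closure of every earlier `U β`, while `closure (U α)` misses the earlier
points. The point `p α` exists by initial `κ`-compactness: it is a cluster point of a net in `S`,
indexed by the finite sets of earlier stages, that eventually enters each `U β` and stays in a
closed neighbourhood of `x` missing the earlier points. The sequence `p` is free of length `κ⁺`,
since the tail from `δ` lies in `{p δ} ∪ closure (U δ)`, which misses the closure of the head.
-/

open Filter Topology

universe u v

theorem WellFoundedLT.exists_forall_image_Iio {ι : Type u} {Z : Type v} [Preorder ι]
    [WellFoundedLT ι] [Nonempty Z] (μ : ι) (R : Set Z → Z → Prop)
    (h : ∀ α < μ, ∀ f : ι → Z, (∀ β < α, R (f '' Iio β) (f β)) → ∃ z, R (f '' Iio α) z) :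
    ∃ f : ι → Z, ∀ α < μ, R (f '' Iio α) (f α) := by
  obtain ⟨f, hf⟩ : ∃ f : ι → Z, ∀ α, f α = Classical.epsilon (R (f '' Iio α)) :=
    ⟨wellFounded_lt.fix fun α prev => Classical.epsilon (R (range fun β : Iio α => prev β β.2)),
      fun α => (wellFounded_lt.fix_eq _ α).trans (by rw [image_eq_range])⟩
  refine ⟨f, fun α => ?_⟩
  induction α using WellFoundedLT.induction with
  | _ α ih =>
    intro hα
    rw [hf]
    exact Classical.epsilon_spec (h α hα f fun β hβ => ih β hβ (hβ.trans hα))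

variable {X : Type u} [TopologicalSpace X] {κ : Cardinal.{u}}

theorem InitiallyCompact.exists_mapClusterPt_atTop (hX : InitiallyCompact X κ) {ι : Type u}
    [Preorder ι] [IsDirectedOrder ι] [Nonempty ι] (hι : #ι ≤ κ) (u : ι → X) :
    ∃ y, MapClusterPt y atTop u := by
  simp_rw [mapClusterPt_atTop_iff_forall_mem_closure]
  by_contra! h
  choose i hi using h
  obtain ⟨𝒱, h𝒱, h𝒱fin, h𝒱cov⟩ := hX (range fun j => (closure (u '' Ici j))ᶜ)
    (by rintro _ ⟨j, rfl⟩; exact isClosed_closure.isOpen_compl) (mk_range_le.trans hι)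
    (eq_univ_of_forall fun y => mem_sUnion.2 ⟨_, ⟨i y, rfl⟩, hi y⟩)
  obtain ⟨t, -, htfin, rfl⟩ := h𝒱fin.exists_subset_finite_image_eq (image_univ ▸ h𝒱)
  obtain ⟨M, hM⟩ := htfin.bddAbove
  obtain ⟨_, ⟨j, hj, rfl⟩, hMj⟩ := mem_sUnion.1 (h𝒱cov ▸ mem_univ (u M))
  exact hMj (subset_closure ⟨M, hM hj, rfl⟩)

def kappaClosure (κ : Cardinal.{u}) (A : Set X) : Set X :=
  {y | ∃ B ⊆ A, #B ≤ κ ∧ y ∈ closure B}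

def IsKappaClosed (κ : Cardinal.{u}) (S : Set X) : Prop :=
  ∀ B ⊆ S, #B ≤ κ → closure B ⊆ S

theorem subset_kappaClosure (hκ : 1 ≤ κ) (A : Set X) : A ⊆ kappaClosure κ A :=
  fun a ha => ⟨{a}, singleton_subset_iff.2 ha, by rwa [mk_singleton], subset_closure rfl⟩

theorem isKappaClosed_kappaClosure (hκ : ℵ₀ ≤ κ) (A : Set X) :
    IsKappaClosed κ (kappaClosure κ A) := by
  intro B hB hBκ y hy
  choose C hCA hCκ hC using fun b : B => hB b.2
  refine ⟨⋃ b, C b, iUnion_subset hCA, ?_, ?_⟩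
  · calc #(⋃ b, C b) ≤ #B * ⨆ b, #(C b) := mk_iUnion_le _
      _ ≤ κ * κ := mul_le_mul' hBκ (ciSup_le' hCκ)
      _ = κ := mul_eq_self hκ
  · have hBC : B ⊆ closure (⋃ b, C b) := fun b hb =>
      closure_mono (subset_iUnion C ⟨b, hb⟩) (hC ⟨b, hb⟩)
    exact closure_minimal hBC isClosed_closure hy

theorem mk_finset_le (hκ : ℵ₀ ≤ κ) {ι : Type u} (hι : #ι ≤ κ) : #(Finset ι) ≤ κ := by
  rcases finite_or_infinite ι with _ | _
  · exact mk_le_aleph0.trans hκ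
  · rwa [mk_finset_of_infinite]

theorem IsKappaClosed.exists_mem_forall_mem_closure [RegularSpace X] (hκ : ℵ₀ ≤ κ)
    (hX : InitiallyCompact X κ) {S : Set X} (hS : IsKappaClosed κ S) {x : X} (hx : x ∈ closure S)
    {ι : Type u} (hι : #ι ≤ κ) {U : ι → Set X} (hU : ∀ i, U i ∈ 𝓝 x) {I : Set X}
    (hI : IsClosed I) (hxI : x ∉ I) : ∃ y ∈ S, y ∉ I ∧ ∀ i, y ∈ closure (U i) := by
  obtain ⟨t, ht, htc, htI⟩ := exists_mem_nhds_isClosed_subset (hI.isOpen_compl.mem_nhds hxI)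
  choose a ha using fun s : Finset ι =>
    mem_closure_iff_nhds.1 hx _ (inter_mem ht ((biInter_finset_mem s).2 fun i _ => hU i))
  have hfin := mk_finset_le hκ hι
  obtain ⟨y, hy⟩ := hX.exists_mapClusterPt_atTop hfin a
  refine ⟨y, hS _ (range_subset_iff.2 fun s => (ha s).2) (mk_range_le.trans hfin)
    (isClosed_closure.mem_of_mapClusterPt hy (.of_forall fun s => subset_closure ⟨s, rfl⟩)),
    fun hyI => htI (htc.mem_of_mapClusterPt hy (.of_forall fun s => (ha s).1.1)) hyI,
    fun i => isClosed_closure.mem_of_mapClusterPt hy (eventually_atTop.2 ⟨{i}, fun s hs => ?_⟩)⟩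
  exact subset_closure (mem_iInter₂.1 (ha s).1.2 i (hs (Finset.mem_singleton_self i)))

theorem isFreeSeq_of_forall [T1Space X] {μ : Ordinal.{u}} {p : Ordinal.{u} → X}
    {U : Ordinal.{u} → Set X} (hp : ∀ α < μ, p α ∉ closure (p '' Iio α))
    (hpU : ∀ α < μ, ∀ β < α, p α ∈ closure (U β))
    (hU : ∀ α < μ, Disjoint (closure (U α)) (closure (p '' Iio α))) : IsFreeSeq μ p := by
  intro δ hδ
  have htail : closure (p '' Ico δ μ) ⊆ insert (p δ) (closure (U δ)) := by
    refine closure_minimal ?_ (insert_eq (p δ) _ ▸ isClosed_singleton.union isClosed_closure)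
    rintro _ ⟨γ, ⟨hδγ, hγ⟩, rfl⟩
    rcases hδγ.eq_or_lt with rfl | hδγ
    · exact mem_insert _ _
    · exact mem_insert_of_mem _ (hpU γ hγ δ hδγ)
  refine eq_empty_of_forall_notMem fun y ⟨hy, hy'⟩ => ?_
  rcases htail hy' with rfl | hyU
  · exact hp δ hδ hy
  · exact (hU δ hδ).notMem_of_mem_left hyU hy

variable (S : Set X) (x : X) in
/-- `prev` is the set of pairs `(p β, U β)` chosen at the earlier stages. -/
def FreeStep (prev : Set (X × Set X)) (next : X × Set X) : Prop :=
  next.1 ∈ S ∧ next.1 ∉ closure (Prod.fst '' prev) ∧ (∀ q ∈ prev, next.1 ∈ closure q.2) ∧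
    next.2 ∈ 𝓝 x ∧ Disjoint (closure next.2) (closure (Prod.fst '' prev))

theorem IsKappaClosed.exists_freeStep [RegularSpace X] (hκ : ℵ₀ ≤ κ) (hX : InitiallyCompact X κ)
    {S : Set X} (hS : IsKappaClosed κ S) {x : X} (hx : x ∈ closure S) (hxS : x ∉ S)
    {prev : Set (X × Set X)} (hprev : #prev ≤ κ) (hprevS : ∀ q ∈ prev, q.1 ∈ S)
    (hprevx : ∀ q ∈ prev, q.2 ∈ 𝓝 x) : ∃ next, FreeStep S x prev next := by
  have hxI : x ∉ closure (Prod.fst '' prev) := fun h =>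
    hxS (hS _ (image_subset_iff.2 hprevS) (mk_image_le.trans hprev) h)
  obtain ⟨p, hpS, hpI, hpU⟩ := hS.exists_mem_forall_mem_closure hκ hX hx hprev
    (U := fun q : prev => q.1.2) (fun q => hprevx q q.2) isClosed_closure hxI
  obtain ⟨V, hV, hVc, hVI⟩ :=
    exists_mem_nhds_isClosed_subset (isClosed_closure.isOpen_compl.mem_nhds hxI)
  exact ⟨(p, V), hpS, hpI, fun q hq => hpU ⟨q, hq⟩, hV,
    by simpa only [hVc.closure_eq] using disjoint_compl_left.mono_left hVI⟩

theorem mk_image_Iio_le_card {Z : Type u} (f : Ordinal.{u} → Z) (α : Ordinal.{u}) :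
    #(f '' Iio α) ≤ α.card := by
  rw [← Cardinal.lift_le.{u + 1}, ← mk_Iio_ordinal]
  exact mk_image_le_lift.trans_eq (lift_id'.{u, u + 1} _)

theorem IsKappaClosed.exists_isFreeSeq [T3Space X] (hκ : ℵ₀ ≤ κ) (hX : InitiallyCompact X κ)
    {S : Set X} (hS : IsKappaClosed κ S) {x : X} (hx : x ∈ closure S) (hxS : x ∉ S) :
    ∃ p : Ordinal.{u} → X, IsFreeSeq (Order.succ κ).ord p := by
  have : Nonempty (X × Set X) := ⟨(x, univ)⟩
  obtain ⟨f, hf⟩ := WellFoundedLT.exists_forall_image_Iio _ (FreeStep S x) fun α hα f hf =>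
    hS.exists_freeStep hκ hX hx hxS
      ((mk_image_Iio_le_card f α).trans (Order.lt_succ_iff.1 (lt_ord.1 hα)))
      (forall_mem_image.2 fun β hβ => (hf β hβ).1)
      (forall_mem_image.2 fun β hβ => (hf β hβ).2.2.2.1)
  simp only [FreeStep, image_image] at hf
  exact ⟨_, isFreeSeq_of_forall (U := fun α => (f α).2) (fun α hα => (hf α hα).2.1)
    (fun α hα β hβ => (hf α hα).2.2.1 _ (mem_image_of_mem f hβ)) fun α hα => (hf α hα).2.2.2.2⟩

/-- A regular, initially `κ`-compact space with no free sequence of length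
`κ⁺` has tightness at most `κ`. -/
theorem tightness_le_of_initiallyCompact (X : Type u) [TopologicalSpace X] [T3Space X]
    (κ : Cardinal.{u}) (hκ : ℵ₀ ≤ κ)
    (hcomp : InitiallyCompact X κ)
    (hfree : ¬ ∃ p : Ordinal.{u} → X, IsFreeSeq ((Order.succ κ).ord) p) :
    ∀ (A : Set X) (x : X), x ∈ closure A → ∃ B ⊆ A, #B ≤ κ ∧ x ∈ closure B := by
  intro A x hx
  by_contra hxA
  change x ∉ kappaClosure κ A at hxA
  have hxS : x ∈ closure (kappaClosure κ A) :=
    closure_mono (subset_kappaClosure (one_le_aleph0.trans hκ) A) hx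
  exact hfree ((isKappaClosed_kappaClosure hκ A).exists_isFreeSeq hκ hcomp hxS hxA)
end

section
/- Let X be a topological space and κ an infinite cardinal. If X is (κ,κ⁺]-compact and t(X) ≤ κ, then X has no free sequence of length κ⁺. -/
/-!
Let `F δ` be the closure of the tail `{p α : δ ≤ α < κ⁺}`. These closed sets decrease, and an
open cover by their complements would have a subcover of size `κ`, whose indices are bounded
below the regular cardinal `κ⁺`; so some point `x` lies in every `F δ`. By tightness, `x` is
in the closure of at most `κ` points of the sequence, again all of index below some `δ < κ⁺`.
Then `x` lies in the closure of both the initial segment and the tail at `δ`.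
-/

open Cardinal Set

/-- `X` is `(κ, κ⁺]`-compact: every open cover of cardinality `κ⁺` has a
subcover of cardinality at most `κ`. -/
def IntervalCompact (X : Type u) [TopologicalSpace X] (κ : Cardinal.{u}) : Prop :=
  ∀ 𝒰 : Set (Set X), (∀ U ∈ 𝒰, IsOpen U) → #𝒰 = Order.succ κ → ⋃₀ 𝒰 = Set.univ →
    ∃ 𝒱 ⊆ 𝒰, #𝒱 ≤ κ ∧ ⋃₀ 𝒱 = Set.univ

variable {X : Type u} [TopologicalSpace X] {κ : Cardinal.{u}}

theorem IntervalCompact.exists_subcover_of_mk_le (hcomp : IntervalCompact X κ)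
    {𝒰 : Set (Set X)} (hopen : ∀ U ∈ 𝒰, IsOpen U) (hcard : #𝒰 ≤ Order.succ κ)
    (hcover : ⋃₀ 𝒰 = Set.univ) : ∃ 𝒱 ⊆ 𝒰, #𝒱 ≤ κ ∧ ⋃₀ 𝒱 = Set.univ := by
  rcases hcard.eq_or_lt with hcard | hcard
  · exact hcomp 𝒰 hopen hcard hcover
  · exact ⟨𝒰, subset_rfl, Order.lt_succ_iff.mp hcard, hcover⟩

theorem IntervalCompact.exists_forall_mem_of_antitone (hcomp : IntervalCompact X κ)
    (hκ : ℵ₀ ≤ κ) {F : Ordinal.{u} → Set X} (hanti : Antitone F)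
    (hclosed : ∀ δ, IsClosed (F δ)) (hne : ∀ δ < (Order.succ κ).ord, (F δ).Nonempty) :
    ∃ x, ∀ δ < (Order.succ κ).ord, x ∈ F δ := by
  set μ := (Order.succ κ).ord
  by_contra! hmiss
  let 𝒰 := (fun δ ↦ (F δ)ᶜ) '' Iio μ
  have hcard : #𝒰 ≤ Order.succ κ := by
    have := mk_image_le_lift (f := fun δ ↦ (F δ)ᶜ) (s := Iio μ)
    rwa [mk_Iio_ordinal, lift_lift, card_ord, lift_le] at this
  have hcover : ⋃₀ 𝒰 = Set.univ := by
    refine eq_univ_of_forall fun x ↦ ?_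
    obtain ⟨δ, hδ, hx⟩ := hmiss x
    exact ⟨_, mem_image_of_mem _ hδ, hx⟩
  obtain ⟨𝒱, h𝒱𝒰, h𝒱card, h𝒱cover⟩ := hcomp.exists_subcover_of_mk_le
    (by rintro _ ⟨δ, -, rfl⟩; exact (hclosed δ).isOpen_compl) hcard hcover
  choose ι hιμ hιV using fun V : 𝒱 ↦ h𝒱𝒰 V.2
  have hsup : ⨆ V, ι V < μ := Ordinal.iSup_lt_of_lt_cof
    (by rw [(isRegular_succ hκ).cof_ord]; exact h𝒱card.trans_lt (Order.lt_succ κ)) hιμ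
  obtain ⟨y, hy⟩ := hne _ hsup
  obtain ⟨V, hV, hyV⟩ := h𝒱cover ▸ Set.mem_univ y
  rw [← show (F (ι ⟨V, hV⟩))ᶜ = V from hιV ⟨V, hV⟩] at hyV
  exact hyV (hanti (Ordinal.le_iSup ι ⟨V, hV⟩) hy)

theorem exists_lt_mem_closure_image_Iio_of_tightness
    (ht : ∀ (A : Set X) (x : X), x ∈ closure A → ∃ B ⊆ A, #B ≤ κ ∧ x ∈ closure B)
    {μ : Ordinal.{u}} (hμ : κ < μ.cof) {p : Ordinal.{u} → X} {x : X}
    (hx : x ∈ closure (p '' Iio μ)) : ∃ δ < μ, x ∈ closure (p '' Iio δ) := by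
  obtain ⟨B, hBp, hBcard, hxB⟩ := ht _ x hx
  choose ι hιμ hιp using fun b : B ↦ hBp b.2
  refine ⟨⨆ b, ι b + 1, Ordinal.iSup_add_one_lt_of_lt_cof (hBcard.trans_lt hμ) hιμ,
    closure_mono (fun b hb ↦ ?_) hxB⟩
  exact ⟨ι ⟨b, hb⟩, (lt_add_one _).trans_le
    (Ordinal.le_iSup (fun b ↦ ι b + 1) ⟨b, hb⟩), hιp ⟨b, hb⟩⟩

/-- A `(κ,κ⁺]`-compact space of tightness at most `κ` has no free sequence
of length `κ⁺`. -/
theorem no_free_seq_of_intervalCompact (X : Type u) [TopologicalSpace X]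
    (κ : Cardinal.{u}) (hκ : ℵ₀ ≤ κ)
    (hcomp : IntervalCompact X κ)
    (ht : ∀ (A : Set X) (x : X), x ∈ closure A → ∃ B ⊆ A, #B ≤ κ ∧ x ∈ closure B) :
    ¬ ∃ p : Ordinal.{u} → X, IsFreeSeq ((Order.succ κ).ord) p := by
  rintro ⟨p, hp⟩
  set μ := (Order.succ κ).ord
  have hreg : (Order.succ κ).IsRegular := isRegular_succ hκ
  let tail : Ordinal.{u} → Set X := fun δ ↦ closure (p '' Ico δ μ)
  obtain ⟨x, hx⟩ := hcomp.exists_forall_mem_of_antitone (F := tail) hκ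
    (fun _ _ h ↦ closure_mono (image_mono (Ico_subset_Ico_left h)))
    (fun _ ↦ isClosed_closure) (fun δ hδ ↦ ⟨p δ, subset_closure ⟨δ, ⟨le_rfl, hδ⟩, rfl⟩⟩)
  obtain ⟨δ, hδ, hxδ⟩ := exists_lt_mem_closure_image_Iio_of_tightness ht
    (by rw [hreg.cof_ord]; exact Order.lt_succ κ)
    (closure_mono (image_mono Ico_subset_Iio_self) (hx 0 hreg.ord_pos))
  exact (hp δ hδ).subset ⟨hxδ, hx δ hδ⟩
end

section
/- Let X be a regular space with a subset Y such that Y = ∪{cl(A) : A ⊆ Y, |A| ≤ κ} (closure taken in X), and suppose Y (as a subspace) is initially κ-compact and X has no free sequence of length κ⁺. Then Y is closed in X. -/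
/-!
Suppose `x ∈ cl Y \ Y`. Then `x` lies outside `cl A` for every `A ⊆ Y` with `|A| ≤ κ`, so by
regularity `x` has a closed neighbourhood `F(A)` missing `cl A`. Choose `p_δ ∈ Y` for `δ < κ⁺` by
transfinite recursion inside every `F({p_γ : γ < β})` with `β ≤ δ`: these are at most `κ` closed
neighbourhoods of a point of `cl Y`, and if `Y` missed their intersection, a finite subfamily
would already cover `Y` by complements, contradicting initial `κ`-compactness. The tail from `δ`
on then lies in the closed set `F({p_γ : γ < δ})`, which misses the closure of the head, so
`p` is a free sequence of length `κ⁺`.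
-/

open Cardinal Set Topology

theorem WellFoundedLT.exists_forall_of_extend {ι α : Type*} [Preorder ι] [WellFoundedLT ι]
    [Nonempty α] (R : (ι → α) → ι → α → Prop)
    (hR : ∀ p q δ, (∀ γ < δ, p γ = q γ) → R p δ = R q δ)
    (hext : ∀ p δ, (∀ γ < δ, R p γ (p γ)) → ∃ z, R p δ z) :
    ∃ p : ι → α, ∀ δ, R p δ (p δ) := by
  classical
  let p : ι → α := WellFoundedLT.fix fun δ prev =>
    Classical.epsilon (R (fun γ => if h : γ < δ then prev γ h else Classical.arbitrary α) δ)
  have hp : ∀ δ, p δ = Classical.epsilon (R p δ) := fun δ => by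
    rw [show p δ = _ from WellFoundedLT.fix_eq _ δ, hR _ p δ fun γ hγ => dif_pos hγ]
  refine ⟨p, fun δ => ?_⟩
  induction δ using WellFoundedLT.induction with
  | ind δ ih => rw [hp]; exact Classical.epsilon_spec (hext p δ ih)

theorem Cardinal.mk_image_Iio_le_of_lt_ord_succ {α : Type u} (f : Ordinal.{u} → α)
    {κ : Cardinal.{u}} {δ : Ordinal.{u}} (hδ : δ < (Order.succ κ).ord) :
    #(f '' Iio δ) ≤ κ := by
  have h : lift.{u + 1} #(f '' Iio δ) ≤ lift.{u} #(Iio δ) := mk_image_le_lift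
  rw [mk_Iio_ordinal, lift_lift, lift_le] at h
  exact h.trans (Order.lt_succ_iff.mp (lt_ord.mp hδ))

theorem Cardinal.mk_image_Iic_le_of_lt_ord_succ {α : Type u} (f : Ordinal.{u} → α)
    {κ : Cardinal.{u}} (hκ : ℵ₀ ≤ κ) {δ : Ordinal.{u}} (hδ : δ < (Order.succ κ).ord) :
    #(f '' Iic δ) ≤ κ := by
  rw [← Order.Iio_succ]
  exact mk_image_Iio_le_of_lt_ord_succ f
    ((isSuccLimit_ord (hκ.trans (Order.le_succ κ))).succ_lt hδ)

section

variable {X : Type u} [TopologicalSpace X]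

def IsInitiallyCompact (κ : Cardinal.{u}) (Y : Set X) : Prop :=
  ∀ 𝒰 : Set (Set X), (∀ U ∈ 𝒰, IsOpen U) → #𝒰 ≤ κ → Y ⊆ ⋃₀ 𝒰 →
    ∃ 𝒱 ⊆ 𝒰, 𝒱.Finite ∧ Y ⊆ ⋃₀ 𝒱

theorem IsInitiallyCompact.inter_sInter_nonempty {κ : Cardinal.{u}} {Y : Set X}
    (hY : IsInitiallyCompact κ Y) {x : X} (hx : x ∈ closure Y) {𝓕 : Set (Set X)}
    (h𝓕 : #𝓕 ≤ κ) (hclosed : ∀ F ∈ 𝓕, IsClosed F) (hnhds : ∀ F ∈ 𝓕, F ∈ 𝓝 x) :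
    (Y ∩ ⋂₀ 𝓕).Nonempty := by
  by_contra hempty
  have hcover : Y ⊆ ⋃₀ (compl '' 𝓕) := fun y hy => by
    obtain ⟨F, hF, hyF⟩ : ∃ F ∈ 𝓕, y ∉ F := by
      simp only [Set.Nonempty, mem_inter_iff, mem_sInter, not_exists, not_and, not_forall,
        exists_prop] at hempty
      exact hempty y hy
    exact ⟨Fᶜ, mem_image_of_mem _ hF, hyF⟩
  obtain ⟨𝒱, h𝒱𝓕, h𝒱fin, h𝒱cov⟩ :=
    hY _ (forall_mem_image.2 fun F hF => (hclosed F hF).isOpen_compl) (mk_image_le.trans h𝓕) hcover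
  have hN : ⋂ U ∈ 𝒱, Uᶜ ∈ 𝓝 x := (Filter.biInter_mem h𝒱fin).2 fun U hU => by
    obtain ⟨F, hF, rfl⟩ := h𝒱𝓕 hU
    simpa using hnhds F hF
  obtain ⟨y, hyN, hyY⟩ := mem_closure_iff_nhds.1 hx _ hN
  obtain ⟨U, hU, hyU⟩ := h𝒱cov hyY
  exact mem_iInter₂.1 hyN U hU hyU

theorem isFreeSeq_of_forall_mem {μ : Ordinal.{u}} {p : Ordinal.{u} → X} (F : Ordinal.{u} → Set X)
    (hclosed : ∀ δ < μ, IsClosed (F δ))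
    (hdisj : ∀ δ < μ, Disjoint (F δ) (closure (p '' Iio δ)))
    (hmem : ∀ δ β, δ ≤ β → β < μ → p β ∈ F δ) : IsFreeSeq μ p := by
  intro δ hδ
  have htail : closure (p '' Ico δ μ) ⊆ F δ :=
    closure_minimal (image_subset_iff.2 fun β hβ => hmem δ β hβ.1 hβ.2) (hclosed δ hδ)
  exact ((hdisj δ hδ).symm.mono_right htail).eq_bot

theorem IsInitiallyCompact.exists_seq_mem_nhds {κ : Cardinal.{u}} (hκ : ℵ₀ ≤ κ) {Y : Set X}
    (hY : IsInitiallyCompact κ Y) {x : X} (hx : x ∈ closure Y) (F : Set X → Set X)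
    (hclosed : ∀ A, IsClosed (F A)) (hnhds : ∀ A, F A ∈ 𝓝 x) :
    ∃ p : Ordinal.{u} → X, ∀ δ < (Order.succ κ).ord, p δ ∈ Y ∧ ∀ β ≤ δ, p δ ∈ F (p '' Iio β) := by
  have : Nonempty X := ⟨x⟩
  let R (p : Ordinal.{u} → X) (δ : Ordinal.{u}) (z : X) : Prop :=
    δ < (Order.succ κ).ord → z ∈ Y ∧ ∀ β ≤ δ, z ∈ F (p '' Iio β)
  have hlocal : ∀ p q δ, (∀ γ < δ, p γ = q γ) → R p δ = R q δ := by
    intro p q δ hpq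
    have himage : ∀ β ≤ δ, p '' Iio β = q '' Iio β := fun β hβ =>
      image_congr fun γ hγ => hpq γ (lt_of_lt_of_le hγ hβ)
    funext z
    exact propext (imp_congr_right fun _ => and_congr_right fun _ =>
      forall₂_congr fun β hβ => by rw [himage β hβ])
  have hext : ∀ p δ, ∃ z, R p δ z := by
    intro p δ
    by_cases hδ : δ < (Order.succ κ).ord
    · obtain ⟨z, hzY, hzF⟩ := hY.inter_sInter_nonempty hx
        (mk_image_Iic_le_of_lt_ord_succ (fun β => F (p '' Iio β)) hκ hδ)
        (forall_mem_image.2 fun β _ => hclosed _) (forall_mem_image.2 fun β _ => hnhds _)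
      exact ⟨z, fun _ => ⟨hzY, fun β hβ => hzF _ (mem_image_of_mem _ hβ)⟩⟩
    · exact ⟨x, fun h => (hδ h).elim⟩
  exact WellFoundedLT.exists_forall_of_extend R hlocal fun p δ _ => hext p δ

theorem exists_isFreeSeq_of_mem_closure [RegularSpace X] {κ : Cardinal.{u}} (hκ : ℵ₀ ≤ κ)
    {Y : Set X} (hY : IsInitiallyCompact κ Y) {x : X} (hx : x ∈ closure Y)
    (hsmall : ∀ A ⊆ Y, #A ≤ κ → x ∉ closure A) :
    ∃ p : Ordinal.{u} → X, IsFreeSeq (Order.succ κ).ord p := by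
  have hsep (A : Set X) :
      ∃ F, IsClosed F ∧ F ∈ 𝓝 x ∧ (x ∉ closure A → Disjoint F (closure A)) := by
    by_cases hA : x ∈ closure A
    · exact ⟨univ, isClosed_univ, Filter.univ_mem, fun h => (h hA).elim⟩
    · obtain ⟨F, hF, hFc, hFA⟩ :=
        exists_mem_nhds_isClosed_subset (isClosed_closure.compl_mem_nhds hA)
      exact ⟨F, hFc, hF, fun _ => subset_compl_iff_disjoint_right.1 hFA⟩
  choose F hFclosed hFnhds hFdisj using hsep
  obtain ⟨p, hp⟩ := hY.exists_seq_mem_nhds hκ hx F hFclosed hFnhds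
  have hinit : ∀ δ < (Order.succ κ).ord, p '' Iio δ ⊆ Y := by
    rintro δ hδ _ ⟨γ, hγ, rfl⟩
    exact (hp γ (hγ.trans hδ)).1
  exact ⟨p, isFreeSeq_of_forall_mem (fun δ => F (p '' Iio δ)) (fun δ _ => hFclosed _)
    (fun δ hδ => hFdisj _ (hsmall _ (hinit δ hδ) (mk_image_Iio_le_of_lt_ord_succ p hδ)))
    (fun δ β hδβ hβ => (hp β hβ).2 δ hδβ)⟩

end

/-- Let `X` be regular, `Y ⊆ X` with `Y = ⋃ {cl A : A ⊆ Y, |A| ≤ κ}`,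
`Y` initially `κ`-compact (with respect to covers by open subsets of `X`),
and suppose `X` has no free sequence of length `κ⁺`. Then `Y` is closed. -/
theorem closed_of_kappa_closure (X : Type u) [TopologicalSpace X] [T3Space X]
    (κ : Cardinal.{u}) (hκ : ℵ₀ ≤ κ) (Y : Set X)
    (hY : Y = ⋃₀ {C : Set X | ∃ A : Set X, A ⊆ Y ∧ #A ≤ κ ∧ C = closure A})
    (hcomp : ∀ 𝒰 : Set (Set X), (∀ U ∈ 𝒰, IsOpen U) → #𝒰 ≤ κ → Y ⊆ ⋃₀ 𝒰 →
      ∃ 𝒱 ⊆ 𝒰, 𝒱.Finite ∧ Y ⊆ ⋃₀ 𝒱)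
    (hfree : ¬ ∃ p : Ordinal.{u} → X, IsFreeSeq ((Order.succ κ).ord) p) :
    IsClosed Y := by
  by_contra hnot
  obtain ⟨x, hxcl, hxY⟩ := not_subset.1 (mt isClosed_of_closure_subset hnot)
  have hsmall : ∀ A ⊆ Y, #A ≤ κ → x ∉ closure A := fun A hA hAκ hxA => by
    rw [hY] at hxY
    exact hxY (mem_sUnion_of_mem hxA ⟨A, hA, hAκ, rfl⟩)
  exact hfree (exists_isFreeSeq_of_mem_closure hκ hcomp hxcl hsmall)
end

section
/- Let κ be an infinite cardinal and σ = σ_κ as defined (σ(0)=0, σ(1)=κ, σ(α+1)=σ(α)+|σ(α)| for α>0, continuous at limits). If δ has σ-normal form with last term σ(α_{n-1}) where α_{n-1} is a limit ordinal, then the set {β < α_{n-1} : γ(γ(δ) + σ(β)) = γ(δ)} is cofinal in α_{n-1}, where γ = γ_κ is the associated regressive function. -/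
open Cardinal Set

/-! For `0 < β < α`, continuity of `σ` at the limit `α` gives `|σ β| ≤ |σ α|`, so replacing the
last term `σ α` of the normal form of `δ` by `σ β` and dropping `Δ` yields the normal form of
`γ δ + σ β`, whose prefix is again `γ δ`. -/

lemma NormalForm.replaceLast {κ : Cardinal.{0}} {σ : Ordinal.{0} → Ordinal.{0}}
    {δ Δ α β : Ordinal} {l : List Ordinal} (h : NormalForm κ σ δ (l ++ [α]) Δ)
    (hβ : 0 < β) (hcard : (σ β).card ≤ (σ α).card) :
    NormalForm κ σ ((l.map σ).sum + σ β) (l ++ [β]) 0 := by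
  obtain ⟨-, hchain, -, hΔ⟩ := h
  rw [List.Chain', List.isChain_append] at hchain
  refine ⟨?_, ?_, ?_, zero_le.trans_lt hΔ⟩
  · rw [List.map_append, ← List.sum, List.sum_append]
    simp
  · rw [List.Chain', List.isChain_append]
    refine ⟨hchain.1, List.isChain_singleton _, ?_⟩
    rintro x hx y ⟨⟩
    exact hcard.trans_lt (hchain.2.2 x hx α rfl)
  · intro a ha
    rw [List.getLast?_concat, Option.some_inj] at ha
    exact ha ▸ hβ

theorem gamma_cofinal_at_limit_general (κ : Cardinal.{0})
    (σ : Ordinal.{0} → Ordinal.{0})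
    (hσl : ∀ β : Ordinal, Order.IsSuccLimit β → σ β = sSup (σ '' Set.Iio β))
    (γ : Ordinal → Ordinal)
    (hγ : ∀ (δ : Ordinal) (l : List Ordinal) (Δ : Ordinal),
      NormalForm κ σ δ l Δ → γ δ = (l.dropLast.map σ).foldr (· + ·) 0) :
    ∀ (δ : Ordinal) (l : List Ordinal) (Δ : Ordinal) (α : Ordinal),
      NormalForm κ σ δ l Δ → l.getLast? = some α → Order.IsSuccLimit α →
      ∀ β₀ < α, ∃ β, β₀ ≤ β ∧ β < α ∧ γ (γ δ + σ β) = γ δ := by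
  intro δ l Δ α hNF hlast hlim β₀ hβ₀
  obtain ⟨l, rfl⟩ := List.getLast?_eq_some_iff.1 hlast
  have hγδ : γ δ = (l.map σ).sum := by
    rw [hγ δ _ Δ hNF, List.dropLast_concat]; rfl
  -- `β₀ + 1` rather than `β₀`, since the last index of a normal form must be positive.
  have hβα : β₀ + 1 < α := hlim.succ_lt hβ₀
  have hσβ : σ (β₀ + 1) ≤ σ α := by
    rw [hσl α hlim]
    exact le_csSup Ordinal.bddAbove_of_small ⟨_, hβα, rfl⟩
  have hNF' := hNF.replaceLast (β := β₀ + 1) (Order.lt_add_one_iff.2 zero_le)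
    (Ordinal.card_le_card hσβ)
  refine ⟨β₀ + 1, le_self_add, hβα, ?_⟩
  rw [hγδ, hγ _ _ _ hNF', List.dropLast_concat]; rfl

/-- If the last term of the `σ`-normal form of `δ` is `σ α` with `α` a limit
ordinal, then `{β < α : γ (γ δ + σ β) = γ δ}` is cofinal in `α`. -/
theorem gamma_cofinal_at_limit (κ : Cardinal.{0}) (hκ : ℵ₀ ≤ κ)
    (σ : Ordinal.{0} → Ordinal.{0})
    (hσ0 : σ 0 = 0) (hσ1 : σ 1 = κ.ord)
    (hσs : ∀ α : Ordinal, 0 < α → σ (α + 1) = σ α + ((σ α).card).ord)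
    (hσl : ∀ β : Ordinal, Order.IsSuccLimit β → σ β = sSup (σ '' Set.Iio β))
    (γ : Ordinal → Ordinal)
    (hγ : ∀ (δ : Ordinal) (l : List Ordinal) (Δ : Ordinal),
      NormalForm κ σ δ l Δ → γ δ = (l.dropLast.map σ).foldr (· + ·) 0) :
    ∀ (δ : Ordinal) (l : List Ordinal) (Δ : Ordinal) (α : Ordinal),
      NormalForm κ σ δ l Δ → l.getLast? = some α → Order.IsSuccLimit α →
      ∀ β₀ < α, ∃ β, β₀ ≤ β ∧ β < α ∧ γ (γ δ + σ β) = γ δ :=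
  gamma_cofinal_at_limit_general κ σ hσl γ hγ
end
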